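/- arXiv:2407.08211 — 2 statements merged into one kernel-verified Lean document; each statement's English description precedes it below -/
import Mathlib

section
/- For every prime m ≥ 3, the join graph Γ(Z_{2m}) + Γ(Z_9) does not admit a distance antimagic labeling. -/
open SimpleGraph

/-- The zero-divisor graph of a commutative ring: vertices are the nonzero
zero-divisors, adjacency is `u ≠ v ∧ u * v = 0`. -/
def zeroDivisorGraph (R : Type*) [CommRing R] :
    SimpleGraph {x : R // x ≠ 0 ∧ ∃ y ≠ 0, x * y = 0} where
  Adj u v := u ≠ v ∧ (u : R) * (v : R) = 0
  symm := by
    constructor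
    rintro u v ⟨h1, h2⟩
    exact ⟨h1.symm, by rwa [mul_comm]⟩
  loopless := by constructor; rintro u ⟨h, -⟩; exact h rfl

/-- The join `G + H` of two graphs on disjoint vertex sets: all edges of `G`
and `H`, plus all edges between the two parts. -/
def joinG {α β : Type*} (G : SimpleGraph α) (H : SimpleGraph β) :
    SimpleGraph (α ⊕ β) where
  Adj u v :=
    match u, v with
    | Sum.inl a, Sum.inl b => G.Adj a b
    | Sum.inr a, Sum.inr b => H.Adj a b
    | _, _ => True
  symm := by
    constructor
    rintro (a | a) (b | b) h
    · exact h.symm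
    · trivial
    · trivial
    · exact h.symm
  loopless := by
    constructor
    rintro (a | a) h
    · exact G.loopless.irrefl a h
    · exact H.loopless.irrefl a h

/-- `m` disjoint copies of the graph `G`. -/
def copies {V : Type*} (m : ℕ) (G : SimpleGraph V) : SimpleGraph (Fin m × V) where
  Adj u v := u.1 = v.1 ∧ G.Adj u.2 v.2
  symm := by constructor; rintro u v ⟨h1, h2⟩; exact ⟨h1.symm, h2.symm⟩
  loopless := by constructor; rintro u ⟨-, h⟩; exact G.loopless.irrefl _ h

/-- A graph `G` on `n` vertices admits a distance antimagic labeling if there is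
a bijective labeling of the vertices by `1, …, n` whose open-neighborhood sums
(weights) are pairwise distinct. -/
def IsDistanceAntimagic {V : Type*} (G : SimpleGraph V) : Prop :=
  ∃ f : V ≃ Fin (Nat.card V),
    Function.Injective fun u => ∑ᶠ x ∈ G.neighborSet u, ((f x : ℕ) + 1)


lemma aux_cast_ne (m a : ℕ) (h3 : 3 ≤ m) (ha : 0 < a) (ha2 : a < 2 * m) :
    ((a : ℕ) : ZMod (2 * m)) ≠ 0 := by
  intro h
  rw [ZMod.natCast_eq_zero_iff] at h
  have := Nat.le_of_dvd ha h
  omega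

lemma aux_key (m : ℕ) (hm : m.Prime) (h3 : 3 ≤ m) (b : ZMod (2 * m)) :
    ((2 : ℕ) : ZMod (2 * m)) * b = 0 ↔ ((4 : ℕ) : ZMod (2 * m)) * b = 0 := by
  haveI : NeZero (2 * m) := ⟨by omega⟩
  have hb : ((b.val : ℕ) : ZMod (2 * m)) = b := ZMod.natCast_zmod_val b
  rw [← hb, ← Nat.cast_mul, ← Nat.cast_mul, ZMod.natCast_eq_zero_iff,
    ZMod.natCast_eq_zero_iff]
  have hm2 : ¬ m ∣ 2 := fun h => by have := Nat.le_of_dvd (by norm_num) h; omega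
  constructor
  · rintro ⟨c, hc⟩
    exact ⟨2 * c, by rw [show 4 * b.val = 2 * (2 * b.val) from by ring, hc]; ring⟩
  · rintro ⟨c, hc⟩
    have hmd : m ∣ 4 * b.val := ⟨2 * c, by rw [hc]; ring⟩
    have hm4 : ¬ m ∣ 4 := by
      intro h
      have h2 : m ∣ 2 := hm.dvd_of_dvd_pow (n := 2) (by norm_num; exact h)
      have := Nat.le_of_dvd (by norm_num) h2; omega
    have hmb : m ∣ b.val := ((Nat.Prime.dvd_mul hm).mp hmd).resolve_left hm4
    obtain ⟨c, hc⟩ := hmb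
    exact ⟨c, by rw [hc]; ring⟩

lemma aux_b_ne (m : ℕ) (hm : m.Prime) (h3 : 3 ≤ m) (b : ZMod (2 * m))
    (hzero : ((2 : ℕ) : ZMod (2 * m)) * b = 0) :
    b ≠ ((2 : ℕ) : ZMod (2 * m)) ∧ b ≠ ((4 : ℕ) : ZMod (2 * m)) := by
  constructor
  · rintro rfl
    rw [← Nat.cast_mul, ZMod.natCast_eq_zero_iff] at hzero
    obtain ⟨c, hc⟩ := hzero
    rw [mul_assoc] at hc
    have : m * c = 2 := by omega
    have : m ≤ 2 := by nlinarith [Nat.le_of_dvd (by omega : 0 < 2) ⟨c, this.symm⟩]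
    omega
  · rintro rfl
    rw [← Nat.cast_mul, ZMod.natCast_eq_zero_iff] at hzero
    -- 2 * m ∣ 8
    obtain ⟨c, hc⟩ := hzero
    rw [mul_assoc] at hc
    have h8 : m ∣ 4 := ⟨c, by omega⟩
    have h2 : m ∣ 2 := hm.dvd_of_dvd_pow (n := 2) (by norm_num; exact h8)
    have := Nat.le_of_dvd (by norm_num) h2; omega

theorem stmt5 (m : ℕ) (hm : m.Prime) (h3 : 3 ≤ m) :
    ¬ IsDistanceAntimagic
        (joinG (zeroDivisorGraph (ZMod (2 * m))) (zeroDivisorGraph (ZMod 9))) := by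
  rintro ⟨f, hf⟩
  haveI : NeZero (2 * m) := ⟨by omega⟩
  have hmul2 : ((2 : ℕ) : ZMod (2 * m)) * ((m : ℕ) : ZMod (2 * m)) = 0 := by
    rw [← Nat.cast_mul]; exact ZMod.natCast_self (2 * m)
  have hmul4 : ((4 : ℕ) : ZMod (2 * m)) * ((m : ℕ) : ZMod (2 * m)) = 0 := by
    rw [← Nat.cast_mul, show 4 * m = (2 * m) * 2 by ring, Nat.cast_mul,
      ZMod.natCast_self, zero_mul]
  have hmne : ((m : ℕ) : ZMod (2 * m)) ≠ 0 := aux_cast_ne m m h3 (by omega) (by omega)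
  set u2 : {x : ZMod (2 * m) // x ≠ 0 ∧ ∃ y ≠ 0, x * y = 0} :=
    ⟨((2 : ℕ) : ZMod (2 * m)), aux_cast_ne m 2 h3 (by norm_num) (by omega),
      ⟨((m : ℕ) : ZMod (2 * m)), hmne, hmul2⟩⟩ with hu2
  set u4 : {x : ZMod (2 * m) // x ≠ 0 ∧ ∃ y ≠ 0, x * y = 0} :=
    ⟨((4 : ℕ) : ZMod (2 * m)), aux_cast_ne m 4 h3 (by norm_num) (by omega),
      ⟨((m : ℕ) : ZMod (2 * m)), hmne, hmul4⟩⟩ with hu4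
  set G := joinG (zeroDivisorGraph (ZMod (2 * m))) (zeroDivisorGraph (ZMod 9)) with hG
  have hNset : G.neighborSet (Sum.inl u2) = G.neighborSet (Sum.inl u4) := by
    ext w
    rcases w with b | b
    · simp only [mem_neighborSet, hG, joinG, zeroDivisorGraph]
      constructor
      · rintro ⟨hne, hz⟩
        refine ⟨fun h => (aux_b_ne m hm h3 b.1 hz).2 (congrArg Subtype.val h).symm,
          (aux_key m hm h3 b.1).mp hz⟩
      · rintro ⟨hne, hz⟩
        have hz2 := (aux_key m hm h3 b.1).mpr hz
        exact ⟨fun h => (aux_b_ne m hm h3 b.1 hz2).1 (congrArg Subtype.val h).symm, hz2⟩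
    · simp only [mem_neighborSet, hG, joinG]
  have hw : (fun u => ∑ᶠ x ∈ G.neighborSet u, ((f x : ℕ) + 1)) (Sum.inl u2)
      = (fun u => ∑ᶠ x ∈ G.neighborSet u, ((f x : ℕ) + 1)) (Sum.inl u4) := by
    simp only [hNset]
  have := hf hw
  have h24 : ((2 : ℕ) : ZMod (2 * m)) = ((4 : ℕ) : ZMod (2 * m)) := by
    have := congrArg (fun x => match x with | Sum.inl a => a.1 | Sum.inr _ => 0) this
    simpa [hu2, hu4] using this
  rw [ZMod.natCast_eq_natCast_iff'] at h24
  rw [Nat.mod_eq_of_lt (by omega), Nat.mod_eq_of_lt (by omega)] at h24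
  omega
end

section
/- For every m ≥ 1, the join of m disjoint copies of Γ(Z_9) with one copy of Γ(Z_4) admits a distance antimagic labeling; in fact, labeling the 2m+1 vertices v_1,…,v_{2m+1} by f(v_i) = i (where v_{2i-1}, v_{2i} form the i-th copy of K_2 and v_{2m+1} is the Γ(Z_4) vertex) yields pairwise distinct weights. -/
open SimpleGraph

/-- The join of `m` disjoint copies of `K₂` (on vertices `v_{2i-1}, v_{2i}`,
here 0-indexed as `2i, 2i+1`) with a single vertex `v_{2m+1}` (index `2m`). -/
def mK2JoinK1 (m : ℕ) : SimpleGraph (Fin (2 * m + 1)) where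
  Adj i j := i ≠ j ∧ ((i : ℕ) = 2 * m ∨ (j : ℕ) = 2 * m ∨ (i : ℕ) / 2 = (j : ℕ) / 2)
  symm := by constructor; rintro i j ⟨h1, h2⟩; exact ⟨h1.symm, by tauto⟩
  loopless := by constructor; rintro i ⟨h, -⟩; exact h rfl

lemma weight_eq (m : ℕ) (i : Fin (2*m+1)) :
    ∑ᶠ x ∈ (mK2JoinK1 m).neighborSet i, ((x:ℕ)+1) =
    if (i:ℕ) = 2*m then m*(2*m+1)
    else if (i:ℕ) % 2 = 0 then (i:ℕ) + 2*m + 3 else (i:ℕ) + 2*m + 1 := by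
  by_cases hi : (i:ℕ) = 2*m
  · rw [if_pos hi]
    have hs : (mK2JoinK1 m).neighborSet i = ↑(Finset.univ.erase i) := by
      ext x
      simp only [mem_neighborSet, mK2JoinK1, Finset.coe_erase, Set.mem_diff,
        Set.mem_singleton_iff, Finset.coe_univ, Set.mem_univ, true_and, ne_eq]
      constructor
      · rintro ⟨h1, -⟩ h2; exact h1 h2.symm
      · intro h; exact ⟨fun h2 => h h2.symm, Or.inl hi⟩
    rw [hs, finsum_mem_coe_finset]
    have h1 : (∑ x ∈ Finset.univ.erase i, ((x:ℕ)+1)) + ((i:ℕ)+1)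
        = ∑ x : Fin (2*m+1), ((x:ℕ)+1) :=
      Finset.sum_erase_add Finset.univ (fun x : Fin (2*m+1) => (x:ℕ)+1) (Finset.mem_univ i)
    have h2 : ∑ x : Fin (2*m+1), ((x:ℕ)+1) = (∑ x ∈ Finset.range (2*m+1), x) + (2*m+1) := by
      rw [Finset.sum_add_distrib, Finset.sum_const, smul_eq_mul, mul_one,
        Finset.card_univ, Fintype.card_fin, Fin.sum_univ_eq_sum_range (fun i => i)]
    have h3 := Finset.sum_range_id_mul_two (2*m+1)
    have h4 : (2*m+1) * (2*m+1-1) = (m*(2*m+1))*2 := by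
      have h5 : 2*m+1-1 = 2*m := rfl
      rw [h5]; ring
    omega
  · rw [if_neg hi]
    have hiv := i.isLt
    have hilt : (i:ℕ) < 2*m := by omega
    set p : Fin (2*m+1) := ⟨if (i:ℕ) % 2 = 0 then (i:ℕ)+1 else (i:ℕ)-1, by
      split <;> omega⟩ with hp
    set l : Fin (2*m+1) := ⟨2*m, by omega⟩ with hl
    have hpv : (p:ℕ) = if (i:ℕ) % 2 = 0 then (i:ℕ)+1 else (i:ℕ)-1 := rfl
    have hpl : p ≠ l := by
      simp only [Fin.ne_iff_vne, hpv, hl]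
      split <;> omega
    have hs : (mK2JoinK1 m).neighborSet i = {p, l} := by
      ext x
      have hxv := x.isLt
      simp only [mem_neighborSet, mK2JoinK1, Set.mem_insert_iff,
        Set.mem_singleton_iff, ne_eq, Fin.ext_iff, hpv, hl]
      constructor
      · rintro ⟨h1, h2 | h2 | h2⟩
        · omega
        · omega
        · split <;> omega
      · rintro (h | h)
        · constructor
          · split at h <;> omega
          · right; right; split at h <;> omega
        · exact ⟨by omega, Or.inr (Or.inl h)⟩
    rw [hs, finsum_mem_pair hpl]
    have hlv : (l:ℕ) = 2*m := rfl
    rw [hpv, hlv]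
    split <;> omega

theorem stmt7 (m : ℕ) (hm : 1 ≤ m) :
    Function.Injective (fun i : Fin (2 * m + 1) =>
      ∑ᶠ x ∈ (mK2JoinK1 m).neighborSet i, ((x : ℕ) + 1)) ∧
    IsDistanceAntimagic (mK2JoinK1 m) := by
  have hA : m*(2*m+1) = 3 ∨ 4*m+2 ≤ m*(2*m+1) := by
    rcases Nat.lt_or_ge m 2 with h | h
    · left; interval_cases m; rfl
    · right
      calc 4*m+2 = 2*(2*m+1) := by ring
        _ ≤ m*(2*m+1) := Nat.mul_le_mul_right _ h
  have hinj : Function.Injective (fun i : Fin (2 * m + 1) =>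
      ∑ᶠ x ∈ (mK2JoinK1 m).neighborSet i, ((x : ℕ) + 1)) := by
    intro a b hab
    simp only [weight_eq] at hab
    have ha := a.isLt
    have hb := b.isLt
    apply Fin.ext
    split_ifs at hab <;> omega
  refine ⟨hinj, ⟨finCongr (by simp), ?_⟩⟩
  simpa only [finCongr_apply, Fin.coe_cast] using hinj
end
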